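/- arXiv:2505.03908 — 6 statements merged into one kernel-verified Lean document; each statement's English description precedes it below -/
import Mathlib

section
/- For every finite set F of flows in C_{N,R}, every switch index i ∈ {1,…,R}, and every positive integer k, the number of flows f ∈ F with i(f) = i and dem(f) > OPT(F)/k is at most N·(k−1); similarly, the number of flows f ∈ F with j(f) = i and dem(f) > OPT(F)/k is at most N·(k−1). -/
open Finset

/-- Congestion of a routing `r` of a finite family of flows in the Clos network
`C_{N,R}`: the maximum, over all input links `I_i M_m` and output links `M_m O_j`,
of the total demand routed through that link. -/
noncomputable def congestion {F : Type*} [Fintype F] {N R : ℕ}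
    (inp out : F → Fin R) (dem : F → ℝ) (r : F → Fin N) : ℝ :=
  ⨆ p : Fin R × Fin N,
    max (∑ f ∈ Finset.univ.filter (fun f => inp f = p.1 ∧ r f = p.2), dem f)
        (∑ f ∈ Finset.univ.filter (fun f => out f = p.1 ∧ r f = p.2), dem f)

/-- The minimum congestion over all routings. -/
noncomputable def OPT {F : Type*} [Fintype F] (N : ℕ) {R : ℕ}
    (inp out : F → Fin R) (dem : F → ℝ) : ℝ :=
  ⨅ r : F → Fin N, congestion inp out dem r

/-- Counting helper: if every element of `S` has demand `> c/k`, `S ⊆ T`, demands are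
positive, and the total demand of `T` is at most `c`, then `S` has at most `k-1`
elements. -/
lemma aux_small_card {α : Type*} (S T : Finset α) (dem : α → ℝ) (c : ℝ) (k : ℕ)
    (hk : 1 ≤ k) (hST : S ⊆ T) (hpos : ∀ f ∈ T, 0 < dem f)
    (hbig : ∀ f ∈ S, c / k < dem f) (hsum : ∑ f ∈ T, dem f ≤ c) :
    S.card ≤ k - 1 := by
  rcases S.eq_empty_or_nonempty with h | h
  · simp [h]
  have hS : ∑ f ∈ S, dem f ≤ c :=
    le_trans (Finset.sum_le_sum_of_subset_of_nonneg hST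
      (fun f hf _ => (hpos f hf).le)) hsum
  have hcpos : 0 < c :=
    lt_of_lt_of_le (Finset.sum_pos (fun f hf => hpos f (hST hf)) h) hS
  have hlt : (S.card : ℝ) * (c / k) < ∑ f ∈ S, dem f := by
    calc (S.card : ℝ) * (c / k) = ∑ _f ∈ S, c / k := by
          rw [Finset.sum_const, nsmul_eq_mul]
      _ < ∑ f ∈ S, dem f := Finset.sum_lt_sum_of_nonempty h hbig
  have hk0 : (0 : ℝ) < k := by exact_mod_cast hk
  have hcard : (S.card : ℝ) < k := by
    have h1 := hlt.trans_le hS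
    have hck : 0 < c / k := div_pos hcpos hk0
    have : (S.card : ℝ) * (c / k) < (k : ℝ) * (c / k) := by
      rw [mul_div_cancel₀ c (ne_of_gt hk0)] at *
      exact h1
    exact lt_of_mul_lt_mul_right this hck.le
  have : S.card < k := by exact_mod_cast hcard
  omega

open scoped Classical in
/-- One side of the main theorem, for a general incidence function `g`. -/
lemma aux_half {F : Type*} [Fintype F] {N R : ℕ}
    (g : F → Fin R) (dem : F → ℝ) (hdem : ∀ f, 0 < dem f)
    (r : F → Fin N) (i : Fin R) (c : ℝ) (k : ℕ) (hk : 1 ≤ k)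
    (hbound : ∀ m : Fin N,
      ∑ f ∈ Finset.univ.filter (fun f => g f = i ∧ r f = m), dem f ≤ c) :
    (Finset.univ.filter fun f => g f = i ∧ c / (k : ℝ) < dem f).card ≤ N * (k - 1) := by
  set S := Finset.univ.filter fun f => g f = i ∧ c / (k : ℝ) < dem f with hSdef
  have hcard : S.card = ∑ m : Fin N, (S.filter fun f => r f = m).card :=
    Finset.card_eq_sum_card_fiberwise (fun f _ => Finset.mem_univ (r f))
  rw [hcard]
  have hfib : ∀ m : Fin N, (S.filter fun f => r f = m).card ≤ k - 1 := by
    intro m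
    apply aux_small_card _ (Finset.univ.filter (fun f => g f = i ∧ r f = m)) dem c k hk
    · intro f hf
      simp only [hSdef, Finset.mem_filter, Finset.mem_univ, true_and] at hf ⊢
      exact ⟨hf.1.1, hf.2⟩
    · intro f _; exact hdem f
    · intro f hf
      simp only [hSdef, Finset.mem_filter] at hf
      exact hf.1.2.2
    · exact hbound m
  calc ∑ m : Fin N, (S.filter fun f => r f = m).card
      ≤ ∑ _m : Fin N, (k - 1) := Finset.sum_le_sum fun m _ => hfib m
    _ = N * (k - 1) := by simp [Finset.sum_const, mul_comm]

open scoped Classical in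
/-- For every switch index `i` and positive integer `k`, the number of flows incident
to `I_i` (resp. `O_i`) with demand greater than `OPT/k` is at most `N·(k-1)`. -/
theorem card_large_demand_le {F : Type*} [Fintype F] {N R : ℕ} (hN : 1 ≤ N)
    (inp out : F → Fin R) (dem : F → ℝ) (hdem : ∀ f, 0 < dem f)
    (i : Fin R) (k : ℕ) (hk : 1 ≤ k) :
    (Finset.univ.filter fun f =>
        inp f = i ∧ OPT N inp out dem / (k : ℝ) < dem f).card ≤ N * (k - 1) ∧
    (Finset.univ.filter fun f =>
        out f = i ∧ OPT N inp out dem / (k : ℝ) < dem f).card ≤ N * (k - 1) := by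
  classical
  have hNe : Nonempty (Fin N) := ⟨⟨0, hN⟩⟩
  have hNe' : Nonempty (F → Fin N) := ⟨fun _ => Classical.arbitrary _⟩
  -- an optimal routing
  obtain ⟨r, -, hrmin⟩ := Finset.exists_min_image (Finset.univ : Finset (F → Fin N))
    (congestion inp out dem) ⟨Classical.arbitrary _, Finset.mem_univ _⟩
  have hOPT : OPT N inp out dem = congestion inp out dem r := by
    apply le_antisymm
    · exact ciInf_le (Set.Finite.bddBelow (Set.finite_range _)) r
    · exact le_ciInf fun r' => hrmin r' (Finset.mem_univ _)
  have hbdd : BddAbove (Set.range fun p : Fin R × Fin N =>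
      max (∑ f ∈ Finset.univ.filter (fun f => inp f = p.1 ∧ r f = p.2), dem f)
          (∑ f ∈ Finset.univ.filter (fun f => out f = p.1 ∧ r f = p.2), dem f)) :=
    Set.Finite.bddAbove (Set.finite_range _)
  have hin : ∀ m : Fin N,
      ∑ f ∈ Finset.univ.filter (fun f => inp f = i ∧ r f = m), dem f
        ≤ OPT N inp out dem := by
    intro m
    rw [hOPT]
    exact le_trans (le_max_left _ _) (le_ciSup hbdd (i, m))
  have hout : ∀ m : Fin N,
      ∑ f ∈ Finset.univ.filter (fun f => out f = i ∧ r f = m), dem f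
        ≤ OPT N inp out dem := by
    intro m
    rw [hOPT]
    exact le_trans (le_max_right _ _) (le_ciSup hbdd (i, m))
  exact ⟨aux_half inp dem hdem r i _ k hk hin, aux_half out dem hdem r i _ k hk hout⟩
end

section
/- Let N ≥ 2 and consider the cross gadget of size N. For every routing of the cross gadget with congestion at most 1: (1) for every i ∈ {1,…,N}, the N−1 flows leaving input switch I_i are assigned pairwise distinct middle switches, and for every j ∈ {1,…,N−1}, the N flows entering output switch O_j are assigned pairwise distinct middle switches; and (2) for every i ∈ {1,…,N} there is a unique middle switch m_i to which no flow leaving I_i is assigned, and the map i ↦ m_i is injective (distinct input switches have distinct unused middle switches). -/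
open Finset

/-- The cross gadget of size `N` in `C_{N,N}`: one demand-`1` flow with input switch
`i` and output switch `j` for every `i ∈ Fin N` and `j ∈ Fin (N-1)`.  For every
routing of the cross gadget with congestion at most `1`:
(1) the flows leaving a common input switch (resp. entering a common output switch)
are assigned pairwise distinct middle switches, and
(2) for every input switch `i` there is a unique middle switch `mm i` to which no
flow leaving `I_i` is assigned, and `i ↦ mm i` is injective. -/
theorem crossGadget_routing_structure {N : ℕ} (hN : 2 ≤ N)
    (r : Fin N × Fin (N - 1) → Fin N)
    (hcong : congestion (fun p => p.1) (fun p => Fin.castLE (Nat.sub_le N 1) p.2)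
        (fun _ => (1 : ℝ)) r ≤ 1) :
    (∀ (i : Fin N) (j₁ j₂ : Fin (N - 1)), r (i, j₁) = r (i, j₂) → j₁ = j₂) ∧
    (∀ (j : Fin (N - 1)) (i₁ i₂ : Fin N), r (i₁, j) = r (i₂, j) → i₁ = i₂) ∧
    ∃ mm : Fin N → Fin N, Function.Injective mm ∧
      (∀ (i : Fin N) (j : Fin (N - 1)), r (i, j) ≠ mm i) ∧
      (∀ (i : Fin N) (m : Fin N), (∀ j : Fin (N - 1), r (i, j) ≠ m) → m = mm i) := by
  classical
  simp only [congestion] at hcong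
  have hle : ∀ p : Fin N × Fin N,
      max (∑ f ∈ Finset.univ.filter (fun f : Fin N × Fin (N-1) => f.1 = p.1 ∧ r f = p.2), (1:ℝ))
          (∑ f ∈ Finset.univ.filter (fun f : Fin N × Fin (N-1) =>
            Fin.castLE (Nat.sub_le N 1) f.2 = p.1 ∧ r f = p.2), (1:ℝ)) ≤ 1 := by
    intro p
    exact le_trans (le_ciSup (f := fun p : Fin N × Fin N =>
      max (∑ f ∈ Finset.univ.filter (fun f : Fin N × Fin (N-1) => f.1 = p.1 ∧ r f = p.2), (1:ℝ))
          (∑ f ∈ Finset.univ.filter (fun f : Fin N × Fin (N-1) =>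
            Fin.castLE (Nat.sub_le N 1) f.2 = p.1 ∧ r f = p.2), (1:ℝ)))
      (Set.Finite.bddAbove (Set.finite_range _)) p) hcong
  have hcard : ∀ (s : Finset (Fin N × Fin (N-1))), (∑ f ∈ s, (1:ℝ)) = s.card := by
    intro s; simp
  have hin : ∀ (i m : Fin N),
      (Finset.univ.filter (fun f : Fin N × Fin (N-1) => f.1 = i ∧ r f = m)).card ≤ 1 := by
    intro i m
    have := (max_le_iff.mp (hle (i, m))).1
    rw [hcard] at this
    exact_mod_cast this
  have hout : ∀ (j m : Fin N),
      (Finset.univ.filter (fun f : Fin N × Fin (N-1) =>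
        Fin.castLE (Nat.sub_le N 1) f.2 = j ∧ r f = m)).card ≤ 1 := by
    intro j m
    have := (max_le_iff.mp (hle (j, m))).2
    rw [hcard] at this
    exact_mod_cast this
  have hrow : ∀ (i : Fin N) (j₁ j₂ : Fin (N - 1)), r (i, j₁) = r (i, j₂) → j₁ = j₂ := by
    intro i j₁ j₂ h
    have h1 : ((i, j₁) : Fin N × Fin (N-1)) ∈
        Finset.univ.filter (fun f => f.1 = i ∧ r f = r (i, j₂)) := by
      simp [h]
    have h2 : ((i, j₂) : Fin N × Fin (N-1)) ∈
        Finset.univ.filter (fun f => f.1 = i ∧ r f = r (i, j₂)) := by simp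
    have := Finset.card_le_one.mp (hin i (r (i, j₂))) _ h1 _ h2
    exact (Prod.mk.injEq _ _ _ _ ▸ this).2
  have hcol : ∀ (j : Fin (N - 1)) (i₁ i₂ : Fin N), r (i₁, j) = r (i₂, j) → i₁ = i₂ := by
    intro j i₁ i₂ h
    have h1 : ((i₁, j) : Fin N × Fin (N-1)) ∈
        Finset.univ.filter (fun f : Fin N × Fin (N-1) =>
          Fin.castLE (Nat.sub_le N 1) f.2 = Fin.castLE (Nat.sub_le N 1) j ∧ r f = r (i₂, j)) := by
      simp [h]
    have h2 : ((i₂, j) : Fin N × Fin (N-1)) ∈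
        Finset.univ.filter (fun f : Fin N × Fin (N-1) =>
          Fin.castLE (Nat.sub_le N 1) f.2 = Fin.castLE (Nat.sub_le N 1) j ∧ r f = r (i₂, j)) := by
      simp
    have := Finset.card_le_one.mp (hout _ (r (i₂, j))) _ h1 _ h2
    exact (Prod.mk.injEq _ _ _ _ ▸ this).1
  refine ⟨hrow, hcol, ?_⟩
  -- complement of each row's image is a singleton
  have hNpos : 0 < N := by omega
  have himgcard : ∀ i : Fin N,
      ((Finset.univ : Finset (Fin (N-1))).image (fun j => r (i, j))).card = N - 1 := by
    intro i
    rw [Finset.card_image_of_injective _ (fun j₁ j₂ h => hrow i j₁ j₂ h)]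
    simp
  have hT : ∀ i : Fin N, ∃ a : Fin N,
      (Finset.univ \ (Finset.univ.image (fun j => r (i, j)))) = {a} := by
    intro i
    apply Finset.card_eq_one.mp
    rw [Finset.card_sdiff_of_subset (Finset.subset_univ _), himgcard, Finset.card_univ, Fintype.card_fin]
    omega
  choose mm hmm using hT
  have hnotin : ∀ i : Fin N, mm i ∉ (Finset.univ.image (fun j => r (i, j))) := by
    intro i
    have : mm i ∈ Finset.univ \ (Finset.univ.image (fun j => r (i, j))) := by
      rw [hmm i]; simp
    exact (Finset.mem_sdiff.mp this).2
  have hne : ∀ (i : Fin N) (j : Fin (N - 1)), r (i, j) ≠ mm i := by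
    intro i j h
    exact hnotin i (Finset.mem_image.mpr ⟨j, Finset.mem_univ _, h⟩)
  have huniq : ∀ (i : Fin N) (m : Fin N), (∀ j : Fin (N - 1), r (i, j) ≠ m) → m = mm i := by
    intro i m hm
    have : m ∈ Finset.univ \ (Finset.univ.image (fun j => r (i, j))) := by
      simp only [Finset.mem_sdiff, Finset.mem_univ, true_and, Finset.mem_image]
      rintro ⟨j, hj⟩
      exact hm j hj
    rw [hmm i] at this
    exact Finset.mem_singleton.mp this
  refine ⟨mm, ?_, hne, huniq⟩
  intro i₁ i₂ heq
  by_contra hne12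
  set m := mm i₂ with hm
  -- each column hits m
  have hsurj : ∀ j : Fin (N-1), ∃ i : Fin N, r (i, j) = m := by
    intro j
    have hinj : Function.Injective (fun i => r (i, j)) := fun a b h => hcol j a b h
    exact (Finite.injective_iff_surjective.mp hinj) m
  choose g hg using hsurj
  have hginj : Function.Injective g := by
    intro j₁ j₂ h
    apply hrow (g j₁) j₁ j₂
    rw [hg j₁, h, hg j₂]
  have hg1 : ∀ j, g j ≠ i₁ := by
    intro j h
    exact hne i₁ j (by rw [show mm i₁ = m from heq, ← h]; exact hg j)
  have hg2 : ∀ j, g j ≠ i₂ := by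
    intro j h
    exact hne i₂ j (by rw [show mm i₂ = m from rfl, ← h]; exact hg j)
  -- count: image of g inside univ \ {i₁, i₂}
  have hsub : (Finset.univ : Finset (Fin (N-1))).image g ⊆
      (Finset.univ : Finset (Fin N)) \ {i₁, i₂} := by
    intro x hx
    obtain ⟨j, -, rfl⟩ := Finset.mem_image.mp hx
    simp [hg1 j, hg2 j]
  have h1 : ((Finset.univ : Finset (Fin (N-1))).image g).card = N - 1 := by
    rw [Finset.card_image_of_injective _ hginj]; simp
  have h2 : ((Finset.univ : Finset (Fin N)) \ {i₁, i₂}).card = N - 2 := by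
    rw [Finset.card_sdiff_of_subset (by intro x hx; exact Finset.mem_univ x)]
    rw [Finset.card_univ, Fintype.card_fin, Finset.card_insert_of_notMem (by simp [hne12]),
      Finset.card_singleton]
  have := Finset.card_le_card hsub
  rw [h1, h2] at this
  omega
end

section
/- Let N ≥ 2 and R ≥ N+1, and let F be the following set of flows in C_{N,R} (all of which have demand 1 or 1/2 and which satisfy the hose constraint): type 1 flows forming the cross gadget of size N on input switches I_1,…,I_N and output switches O_1,…,O_{N−1} (one demand-1 flow from source j of I_i to destination i of O_j for each i ∈ {1,…,N}, j ∈ {1,…,N−1}); type 2 flows: for each i ∈ {1,…,N}, one demand-1/2 flow from source N of I_i to destination ⌈i/2⌉ of O_N; and one type 3 flow of demand 1 from source N of I_{N+1} to destination N of O_N. Then every routing of F has congestion at least 3/2. -/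
open Finset

/-- The flows of the hard instance: `t1 i j` are the cross-gadget flows,
`t2 i` the demand-`1/2` flows into `O_N`, and `t3` the demand-`1` flow from
`I_{N+1}` into `O_N`. -/
inductive GFlow (N : ℕ) where
  | t1 (i : Fin N) (j : Fin (N - 1))
  | t2 (i : Fin N)
  | t3
  deriving DecidableEq, Fintype

/-- Input switch (0-based) of each flow in `C_{N,R}`, `R ≥ N + 1`. -/
def gInp {N R : ℕ} (hR : N + 1 ≤ R) : GFlow N → Fin R
  | .t1 i _ => ⟨i.1, by have := i.2; omega⟩
  | .t2 i => ⟨i.1, by have := i.2; omega⟩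
  | .t3 => ⟨N, by omega⟩

/-- Source index (0-based) of each flow. -/
def gSrc {N : ℕ} (hN : 2 ≤ N) : GFlow N → Fin N
  | .t1 _ j => ⟨j.1, by have := j.2; omega⟩
  | .t2 _ => ⟨N - 1, by omega⟩
  | .t3 => ⟨N - 1, by omega⟩

/-- Output switch (0-based) of each flow. -/
def gOut {N R : ℕ} (hN : 2 ≤ N) (hR : N + 1 ≤ R) : GFlow N → Fin R
  | .t1 _ j => ⟨j.1, by have := j.2; omega⟩
  | .t2 _ => ⟨N - 1, by omega⟩
  | .t3 => ⟨N - 1, by omega⟩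

/-- Destination index (0-based): flow `t1 i j` enters destination `i` of `O_j`;
flow `t2 i` (1-based input switch `i+1`) enters destination `⌈(i+1)/2⌉` of `O_N`,
which is 0-based `i/2`; `t3` enters destination `N` of `O_N`. -/
def gDst {N : ℕ} (hN : 2 ≤ N) : GFlow N → Fin N
  | .t1 i _ => i
  | .t2 i => ⟨i.1 / 2, by have := i.2; omega⟩
  | .t3 => ⟨N - 1, by omega⟩

/-- Demands: `1` for type 1 and type 3, `1/2` for type 2. -/
noncomputable def gDem {N : ℕ} : GFlow N → ℝ
  | .t1 _ _ => 1
  | .t2 _ => 1 / 2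
  | .t3 => 1

lemma congestion_pair_le {F : Type*} [Fintype F] [DecidableEq F] {N R : ℕ}
    (inp out : F → Fin R) (dem : F → ℝ) (r : F → Fin N)
    (hd : ∀ f, 0 ≤ dem f) {f₁ f₂ : F} (hne : f₁ ≠ f₂)
    (hio : inp f₁ = inp f₂ ∨ out f₁ = out f₂) (hr : r f₁ = r f₂) :
    dem f₁ + dem f₂ ≤ congestion inp out dem r := by
  have hbdd : BddAbove (Set.range (fun p : Fin R × Fin N =>
      max (∑ f ∈ Finset.univ.filter (fun f => inp f = p.1 ∧ r f = p.2), dem f)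
          (∑ f ∈ Finset.univ.filter (fun f => out f = p.1 ∧ r f = p.2), dem f))) :=
    (Set.finite_range _).bddAbove
  rcases hio with hi | ho
  · have h1 : dem f₁ + dem f₂ ≤
        ∑ f ∈ Finset.univ.filter (fun f => inp f = inp f₂ ∧ r f = r f₂), dem f := by
      rw [← Finset.sum_pair hne]
      apply Finset.sum_le_sum_of_subset_of_nonneg
      · intro f hf
        simp only [Finset.mem_insert, Finset.mem_singleton] at hf
        simp only [Finset.mem_filter, Finset.mem_univ, true_and]
        rcases hf with rfl | rfl
        · exact ⟨hi, hr⟩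
        · exact ⟨rfl, rfl⟩
      · intros f _ _; exact hd f
    have h2 := le_ciSup hbdd (inp f₂, r f₂)
    exact h1.trans ((le_max_left _ _).trans h2)
  · have h1 : dem f₁ + dem f₂ ≤
        ∑ f ∈ Finset.univ.filter (fun f => out f = out f₂ ∧ r f = r f₂), dem f := by
      rw [← Finset.sum_pair hne]
      apply Finset.sum_le_sum_of_subset_of_nonneg
      · intro f hf
        simp only [Finset.mem_insert, Finset.mem_singleton] at hf
        simp only [Finset.mem_filter, Finset.mem_univ, true_and]
        rcases hf with rfl | rfl
        · exact ⟨ho, hr⟩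
        · exact ⟨rfl, rfl⟩
      · intros f _ _; exact hd f
    have h2 := le_ciSup hbdd (out f₂, r f₂)
    exact h1.trans ((le_max_right _ _).trans h2)

/-- Every routing of the hard instance in `C_{N,R}` (`N ≥ 2`, `R ≥ N + 1`) has
congestion at least `3/2`. -/
theorem hard_instance_congestion_ge {N R : ℕ} (hN : 2 ≤ N) (hR : N + 1 ≤ R)
    (r : GFlow N → Fin N) :
    3 / 2 ≤ congestion (gInp hR) (gOut hN hR) gDem r := by
  by_contra hcon
  push_neg at hcon
  have hd : ∀ f : GFlow N, 0 ≤ gDem f := by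
    intro f; cases f <;> simp [gDem]
  -- key: no two distinct flows with total demand ≥ 3/2 sharing a link
  have key : ∀ f₁ f₂ : GFlow N, f₁ ≠ f₂ → (3 : ℝ)/2 ≤ gDem f₁ + gDem f₂ →
      (gInp hR f₁ = gInp hR f₂ ∨ gOut hN hR f₁ = gOut hN hR f₂) →
      r f₁ ≠ r f₂ := by
    intro f₁ f₂ hne hdem hio hr
    exact absurd (hdem.trans (congestion_pair_le _ _ _ _ hd hne hio hr)) (not_le.2 hcon)
  -- fact 1 : within a row, the t1 flows use distinct middles
  have row_inj : ∀ i : Fin N, Function.Injective (fun j : Fin (N-1) => r (.t1 i j)) := by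
    intro i j j' h
    by_contra hjj
    exact key (.t1 i j) (.t1 i j') (by simp [hjj]) (by norm_num [gDem])
      (Or.inl rfl) h
  -- fact 2 : within a column, the t1 flows use distinct middles
  have col_inj : ∀ j : Fin (N-1), Function.Injective (fun i : Fin N => r (.t1 i j)) := by
    intro j i i' h
    by_contra hii
    exact key (.t1 i j) (.t1 i' j) (by simp [hii]) (by norm_num [gDem])
      (Or.inr rfl) h
  have col_surj : ∀ j : Fin (N-1), Function.Surjective (fun i : Fin N => r (.t1 i j)) :=
    fun j => Finite.surjective_of_injective (col_inj j)
  -- fact 3 : t2 i avoids the middles of row i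
  have t2_row : ∀ (i : Fin N) (j : Fin (N-1)), r (.t2 i) ≠ r (.t1 i j) := by
    intro i j
    exact key (.t2 i) (.t1 i j) (by simp) (by norm_num [gDem]) (Or.inl rfl)
  -- fact 4 : t3 avoids the middles of the t2 flows
  have t3_t2 : ∀ i : Fin N, r .t3 ≠ r (.t2 i) := by
    intro i
    exact key .t3 (.t2 i) (by simp) (by norm_num [gDem]) (Or.inr rfl)
  -- the row sets
  set S : Fin N → Finset (Fin N) :=
    fun i => Finset.image (fun j : Fin (N-1) => r (.t1 i j)) Finset.univ with hS
  have hmemS : ∀ i m, m ∈ S i ↔ ∃ j, r (.t1 i j) = m := by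
    intro i m; simp [hS]
  -- for i ≠ i', r (t2 i) lies in row i'
  have t2_mem : ∀ i i' : Fin N, i ≠ i' → r (.t2 i) ∈ S i' := by
    intro i i' hii
    by_contra hm
    set m := r (.t2 i) with hmdef
    have hmi : m ∉ S i := by
      rw [hmemS]
      rintro ⟨j, hj⟩
      exact t2_row i j hj.symm
    -- for each column j, some row contains m, and that row is neither i nor i'
    have hcol : ∀ j : Fin (N-1), ∃ i0 : Fin N, r (.t1 i0 j) = m := fun j => col_surj j m
    classical
    set h : Fin (N-1) → Fin N := fun j => (hcol j).choose with hh
    have hhspec : ∀ j, r (.t1 (h j) j) = m := fun j => (hcol j).choose_spec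
    have hinj : Function.Injective h := by
      intro j j' hjj
      apply row_inj (h j)
      show r (.t1 (h j) j) = r (.t1 (h j) j')
      rw [hhspec j, hjj, hhspec j']
    have hnot : ∀ j, h j ≠ i ∧ h j ≠ i' := by
      intro j
      constructor
      · intro heq
        exact hmi ((hmemS i m).2 ⟨j, heq ▸ hhspec j⟩)
      · intro heq
        exact hm ((hmemS i' m).2 ⟨j, heq ▸ hhspec j⟩)
    -- cardinality contradiction
    have hsub : Finset.image h Finset.univ ⊆ Finset.univ \ {i, i'} := by
      intro x hx
      simp only [Finset.mem_image, Finset.mem_univ, true_and] at hx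
      obtain ⟨j, rfl⟩ := hx
      simp only [Finset.mem_sdiff, Finset.mem_univ, true_and, Finset.mem_insert,
        Finset.mem_singleton]
      push_neg
      exact hnot j
    have hc1 : (Finset.image h Finset.univ).card = N - 1 := by
      rw [Finset.card_image_of_injective _ hinj, Finset.card_univ, Fintype.card_fin]
    have hc2 : (Finset.univ \ ({i, i'} : Finset (Fin N))).card = N - 2 := by
      rw [Finset.card_sdiff_of_subset (Finset.subset_univ _), Finset.card_univ, Fintype.card_fin,
        Finset.card_insert_of_notMem (by simpa using hii), Finset.card_singleton]
    have := Finset.card_le_card hsub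
    rw [hc1, hc2] at this
    omega
  -- hence i ↦ r (t2 i) is injective
  have t2_inj : Function.Injective (fun i : Fin N => r (.t2 i)) := by
    intro i i' hii
    by_contra hne
    have h1 : r (.t2 i) ∈ S i' := t2_mem i i' hne
    rw [hmemS] at h1
    obtain ⟨j, hj⟩ := h1
    have hii' : r (.t2 i) = r (.t2 i') := hii
    exact t2_row i' j (hii'.symm.trans hj.symm)
  have t2_surj : Function.Surjective (fun i : Fin N => r (.t2 i)) :=
    Finite.surjective_of_injective t2_inj
  obtain ⟨i₀, hi₀⟩ := t2_surj (r .t3)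
  exact t3_t2 i₀ hi₀.symm
end

section
/- Let N = 2n ≥ 2 be even and work in C_{N,3} with the sequences X and Y of unit-demand flows. Then: (P1) for every link-disjoint routing of the flows of X, the set of middle switches assigned to the n flows (I_1,O_1) equals the set of middle switches assigned to the n flows (I_2,O_2); (P2) for every link-disjoint routing of the flows of Y, the set of middle switches assigned to the n flows (I_1,O_1) is the complement in {1,…,N} of the set assigned to the n flows (I_2,O_2); consequently, no assignment of middle switches to the flows of the common prefix X1 can be extended to a link-disjoint routing of X and also to a link-disjoint routing of Y. -/
/-!
Sequences `X` and `Y` in `C_{N,3}` with `N = 2n`.  A routing of `X` is given by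
`fA fB fC : Fin n → Fin (2n)` assigning middle switches to the `n` flows
`(I₁,O₁)`, the `n` flows `(I₂,O₂)` (together the common prefix `X1`), and the `n`
flows `(I₁,O₂)`; a routing of `Y` is given by `fA fB` together with
`gC gD : Fin n → Fin (2n)` for the `n` flows `(I₃,O₁)` and the `n` flows `(I₃,O₂)`.
Link-disjointness (congestion at most `1`) states that flows sharing an input
switch or an output switch receive pairwise distinct middle switches, expressed
by injectivity of the corresponding combined assignments.
-/

/-- If the combined assignment of two families of `n` flows into `Fin (2n)` is
injective, then the range of the first family is the complement of the range of
the second. -/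
lemma range_compl_of_injective_elim {n : ℕ} {f g : Fin n → Fin (2 * n)}
    (h : Function.Injective (Sum.elim f g)) :
    Set.range f = (Set.range g)ᶜ := by
  have hcard : Fintype.card (Fin n ⊕ Fin n) = Fintype.card (Fin (2 * n)) := by
    simp [two_mul]
  have hs : Function.Surjective (Sum.elim f g) :=
    ((Fintype.bijective_iff_injective_and_card (Sum.elim f g)).2 ⟨h, hcard⟩).2
  ext x
  constructor
  · rintro ⟨i, rfl⟩ ⟨j, hj⟩
    have : (Sum.inl i : Fin n ⊕ Fin n) = Sum.inr j := h (by simpa using hj.symm)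
    simp at this
  · intro hx
    obtain ⟨s, hs'⟩ := hs x
    cases s with
    | inl i => exact ⟨i, hs'⟩
    | inr j => exact absurd ⟨j, hs'⟩ hx

/-- (P1) In every link-disjoint routing of `X`, the set of middle switches assigned
to the flows `(I₁,O₁)` equals the set assigned to the flows `(I₂,O₂)`;
(P2) in every link-disjoint routing of `Y`, the set of middle switches assigned to
the flows `(I₁,O₁)` is the complement of the set assigned to the flows `(I₂,O₂)`;
consequently, no assignment to the common prefix `X1` extends both to a
link-disjoint routing of `X` and to a link-disjoint routing of `Y`. -/
theorem sequences_X_Y_incompatible {n : ℕ} (hn : 1 ≤ n) :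
    (∀ fA fB fC : Fin n → Fin (2 * n),
      Function.Injective (Sum.elim fA fC) →   -- input switch I₁
      Function.Injective fB →                 -- input switch I₂
      Function.Injective fA →                 -- output switch O₁
      Function.Injective (Sum.elim fB fC) →   -- output switch O₂
      Set.range fA = Set.range fB) ∧
    (∀ fA fB gC gD : Fin n → Fin (2 * n),
      Function.Injective fA →                 -- input switch I₁
      Function.Injective fB →                 -- input switch I₂
      Function.Injective (Sum.elim gC gD) →   -- input switch I₃
      Function.Injective (Sum.elim fA gC) →   -- output switch O₁
      Function.Injective (Sum.elim fB gD) →   -- output switch O₂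
      Set.range fA = (Set.range fB)ᶜ) ∧
    ¬ ∃ fA fB : Fin n → Fin (2 * n),
        (∃ fC : Fin n → Fin (2 * n),
          Function.Injective (Sum.elim fA fC) ∧ Function.Injective fB ∧
          Function.Injective fA ∧ Function.Injective (Sum.elim fB fC)) ∧
        (∃ gC gD : Fin n → Fin (2 * n),
          Function.Injective fA ∧ Function.Injective fB ∧
          Function.Injective (Sum.elim gC gD) ∧
          Function.Injective (Sum.elim fA gC) ∧
          Function.Injective (Sum.elim fB gD)) := by
  have P1 : ∀ fA fB fC : Fin n → Fin (2 * n),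
      Function.Injective (Sum.elim fA fC) →
      Function.Injective fB →
      Function.Injective fA →
      Function.Injective (Sum.elim fB fC) →
      Set.range fA = Set.range fB := by
    intro fA fB fC h1 _ _ h4
    rw [range_compl_of_injective_elim h1, range_compl_of_injective_elim h4]
  have P2 : ∀ fA fB gC gD : Fin n → Fin (2 * n),
      Function.Injective fA →
      Function.Injective fB →
      Function.Injective (Sum.elim gC gD) →
      Function.Injective (Sum.elim fA gC) →
      Function.Injective (Sum.elim fB gD) →
      Set.range fA = (Set.range fB)ᶜ := by
    intro fA fB gC gD _ _ h3 h4 h5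
    rw [range_compl_of_injective_elim h4, range_compl_of_injective_elim h5,
      range_compl_of_injective_elim h3, compl_compl]
  refine ⟨P1, P2, ?_⟩
  rintro ⟨fA, fB, ⟨fC, hx1, hx2, hx3, hx4⟩, ⟨gC, gD, hy1, hy2, hy3, hy4, hy5⟩⟩
  have e1 : Set.range fA = Set.range fB := P1 fA fB fC hx1 hx2 hx3 hx4
  have e2 : Set.range fA = (Set.range fB)ᶜ := P2 fA fB gC gD hy1 hy2 hy3 hy4 hy5
  have hmem : fA ⟨0, hn⟩ ∈ Set.range fA := ⟨_, rfl⟩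
  have hmem2 : fA ⟨0, hn⟩ ∈ (Set.range fB)ᶜ := e2 ▸ hmem
  exact hmem2 (e1 ▸ hmem)
end

section
/- Let N = 2n ≥ 2 be even and R ≥ 3. For every deterministic online algorithm A on C_{N,R}, there is a sequence of unit-demand flows — namely one of the two sequences X and Y — for which the routing induced by A has congestion at least 2. -/
open Finset

/-- A unit-demand flow in the Clos network `C_{N,R}`. -/
structure UFlow (N R : ℕ) where
  inp : Fin R
  src : Fin N
  out : Fin R
  dst : Fin N
  deriving DecidableEq

/-- The routing induced by a deterministic online algorithm `A` on a sequence `L` of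
flows: the flow at position `t` is assigned the middle switch `A (f₁, …, f_t)`. -/
def assign {N R : ℕ} (A : List (UFlow N R) → Fin N) (L : List (UFlow N R)) :
    Fin L.length → Fin N :=
  fun t => A (L.take (t.1 + 1))

/-- Number of flows of `L` routed by the induced routing through input link
`I_i M_mm`. -/
def inCount {N R : ℕ} (A : List (UFlow N R) → Fin N) (L : List (UFlow N R))
    (i : Fin R) (mm : Fin N) : ℕ :=
  (Finset.univ.filter fun t : Fin L.length =>
    (L.get t).inp = i ∧ assign A L t = mm).card

/-- Number of flows of `L` routed by the induced routing through output link
`M_mm O_i`. -/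
def outCount {N R : ℕ} (A : List (UFlow N R) → Fin N) (L : List (UFlow N R))
    (i : Fin R) (mm : Fin N) : ℕ :=
  (Finset.univ.filter fun t : Fin L.length =>
    (L.get t).out = i ∧ assign A L t = mm).card

/-- Sequence `X` in `C_{2n,R}` (`R ≥ 3`): `n` flows `I₁ → O₁`, then `n` flows
`I₂ → O₂` (the prefix `X1`), then `n` flows `I₁ → O₂`; flows sharing an input
(output) switch use pairwise distinct sources (destinations). -/
def seqX (n R : ℕ) (hR : 3 ≤ R) : List (UFlow (2 * n) R) :=
  ((List.finRange n).map fun k =>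
    (⟨⟨0, by omega⟩, ⟨k.1, by have := k.2; omega⟩,
      ⟨0, by omega⟩, ⟨k.1, by have := k.2; omega⟩⟩ : UFlow (2 * n) R)) ++
  ((List.finRange n).map fun k =>
    (⟨⟨1, by omega⟩, ⟨k.1, by have := k.2; omega⟩,
      ⟨1, by omega⟩, ⟨k.1, by have := k.2; omega⟩⟩ : UFlow (2 * n) R)) ++
  ((List.finRange n).map fun k =>
    (⟨⟨0, by omega⟩, ⟨n + k.1, by have := k.2; omega⟩,
      ⟨1, by omega⟩, ⟨n + k.1, by have := k.2; omega⟩⟩ : UFlow (2 * n) R))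

/-- Sequence `Y` in `C_{2n,R}` (`R ≥ 3`): the prefix `X1`, then `n` flows `I₃ → O₁`
and `n` flows `I₃ → O₂`. -/
def seqY (n R : ℕ) (hR : 3 ≤ R) : List (UFlow (2 * n) R) :=
  ((List.finRange n).map fun k =>
    (⟨⟨0, by omega⟩, ⟨k.1, by have := k.2; omega⟩,
      ⟨0, by omega⟩, ⟨k.1, by have := k.2; omega⟩⟩ : UFlow (2 * n) R)) ++
  ((List.finRange n).map fun k =>
    (⟨⟨1, by omega⟩, ⟨k.1, by have := k.2; omega⟩,
      ⟨1, by omega⟩, ⟨k.1, by have := k.2; omega⟩⟩ : UFlow (2 * n) R)) ++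
  ((List.finRange n).map fun k =>
    (⟨⟨2, by omega⟩, ⟨k.1, by have := k.2; omega⟩,
      ⟨0, by omega⟩, ⟨n + k.1, by have := k.2; omega⟩⟩ : UFlow (2 * n) R)) ++
  ((List.finRange n).map fun k =>
    (⟨⟨2, by omega⟩, ⟨n + k.1, by have := k.2; omega⟩,
      ⟨1, by omega⟩, ⟨n + k.1, by have := k.2; omega⟩⟩ : UFlow (2 * n) R))


section Aux

variable {n R : ℕ} (hR : 3 ≤ R)

lemma lenX : (seqX n R hR).length = 3 * n := by simp [seqX]; omega

lemma lenY : (seqY n R hR).length = 4 * n := by simp [seqY]; omega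

lemma take_aux {α : Type*} (l12 l3 l4 l5 : List α) (m : ℕ) (h : m ≤ l12.length) :
    (l12 ++ l3).take m = ((l12 ++ l4) ++ l5).take m := by
  rw [List.take_append_of_le_length h,
    List.take_append_of_le_length (by simp; omega),
    List.take_append_of_le_length h]

lemma takeXY (m : ℕ) (hm : m ≤ 2 * n) :
    (seqX n R hR).take m = (seqY n R hR).take m := by
  exact take_aux _ _ _ _ m (by simp; omega)

lemma getX_inp0 (k : ℕ) (hk : k < n) (h : k < (seqX n R hR).length) :
    ((seqX n R hR)[k]).inp = ⟨0, by omega⟩ := by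
  simp only [seqX, List.getElem_append]
  rw [dif_pos (by simp; omega), dif_pos (by simp; omega)]
  simp

lemma getX_inp1 (k : ℕ) (hk1 : n ≤ k) (hk2 : k < 2 * n) (h : k < (seqX n R hR).length) :
    ((seqX n R hR)[k]).inp = ⟨1, by omega⟩ := by
  simp only [seqX, List.getElem_append]
  rw [dif_pos (by simp; omega), dif_neg (by simp; omega)]
  simp

lemma getX_out1b (k : ℕ) (hk1 : n ≤ k) (hk2 : k < 2 * n) (h : k < (seqX n R hR).length) :
    ((seqX n R hR)[k]).out = ⟨1, by omega⟩ := by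
  simp only [seqX, List.getElem_append]
  rw [dif_pos (by simp; omega), dif_neg (by simp; omega)]
  simp

lemma getX_inp0c (k : ℕ) (hk1 : 2 * n ≤ k) (hk2 : k < 3 * n) (h : k < (seqX n R hR).length) :
    ((seqX n R hR)[k]).inp = ⟨0, by omega⟩ := by
  simp only [seqX, List.getElem_append]
  rw [dif_neg (by simp; omega)]
  simp

lemma getX_out1c (k : ℕ) (hk1 : 2 * n ≤ k) (hk2 : k < 3 * n) (h : k < (seqX n R hR).length) :
    ((seqX n R hR)[k]).out = ⟨1, by omega⟩ := by
  simp only [seqX, List.getElem_append]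
  rw [dif_neg (by simp; omega)]
  simp

lemma getY_out0a (k : ℕ) (hk : k < n) (h : k < (seqY n R hR).length) :
    ((seqY n R hR)[k]).out = ⟨0, by omega⟩ := by
  simp only [seqY, List.getElem_append]
  rw [dif_pos (by simp; omega), dif_pos (by simp; omega), dif_pos (by simp; omega)]
  simp

lemma getY_out1b (k : ℕ) (hk1 : n ≤ k) (hk2 : k < 2 * n) (h : k < (seqY n R hR).length) :
    ((seqY n R hR)[k]).out = ⟨1, by omega⟩ := by
  simp only [seqY, List.getElem_append]
  rw [dif_pos (by simp; omega), dif_pos (by simp; omega), dif_neg (by simp; omega)]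
  simp

lemma getY_inp2 (k : ℕ) (hk1 : 2 * n ≤ k) (hk2 : k < 4 * n) (h : k < (seqY n R hR).length) :
    ((seqY n R hR)[k]).inp = ⟨2, by omega⟩ := by
  simp only [seqY, List.getElem_append]
  by_cases hk3 : k < 3 * n
  · rw [dif_pos (by simp; omega), dif_neg (by simp; omega)]
    simp
  · rw [dif_neg (by simp; omega)]
    simp

lemma getY_out0c (k : ℕ) (hk1 : 2 * n ≤ k) (hk2 : k < 3 * n) (h : k < (seqY n R hR).length) :
    ((seqY n R hR)[k]).out = ⟨0, by omega⟩ := by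
  simp only [seqY, List.getElem_append]
  rw [dif_pos (by simp; omega), dif_neg (by simp; omega)]
  simp

lemma getY_out1d (k : ℕ) (hk1 : 3 * n ≤ k) (hk2 : k < 4 * n) (h : k < (seqY n R hR).length) :
    ((seqY n R hR)[k]).out = ⟨1, by omega⟩ := by
  simp only [seqY, List.getElem_append]
  rw [dif_neg (by simp; omega)]
  simp

lemma two_le_filter {α : Type*} [Fintype α] (p : α → Prop) [DecidablePred p]
    (a b : α) (hab : a ≠ b) (ha : p a) (hb : p b) :
    2 ≤ (Finset.univ.filter p).card :=
  Finset.one_lt_card.mpr ⟨a, by simp [ha], b, by simp [hb], hab⟩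

end Aux

/-- For every deterministic online algorithm `A` on `C_{2n,R}` there is a sequence of
unit-demand flows — one of `X` and `Y` — on which the routing induced by `A` has
congestion at least `2`, i.e. some link carries at least `2` flows. -/
theorem online_deterministic_lower_bound {n R : ℕ} (hn : 1 ≤ n) (hR : 3 ≤ R)
    (A : List (UFlow (2 * n) R) → Fin (2 * n)) :
    ∃ L ∈ [seqX n R hR, seqY n R hR], ∃ (i : Fin R) (mm : Fin (2 * n)),
      2 ≤ inCount A L i mm ∨ 2 ≤ outCount A L i mm := by
  classical
  have lX : (seqX n R hR).length = 3 * n := lenX hR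
  have lY : (seqY n R hR).length = 4 * n := lenY hR
  have keyIn : ∀ (L : List (UFlow (2 * n) R)) (i : Fin R) (mm : Fin (2 * n))
      (t1 t2 : Fin L.length), t1 ≠ t2 → (L.get t1).inp = i → (L.get t2).inp = i →
      assign A L t1 = mm → assign A L t2 = mm → 2 ≤ inCount A L i mm := by
    intro L i mm t1 t2 hne h1 h2 h3 h4
    exact two_le_filter _ t1 t2 hne ⟨h1, h3⟩ ⟨h2, h4⟩
  have keyOut : ∀ (L : List (UFlow (2 * n) R)) (i : Fin R) (mm : Fin (2 * n))
      (t1 t2 : Fin L.length), t1 ≠ t2 → (L.get t1).out = i → (L.get t2).out = i →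
      assign A L t1 = mm → assign A L t2 = mm → 2 ≤ outCount A L i mm := by
    intro L i mm t1 t2 hne h1 h2 h3 h4
    exact two_le_filter _ t1 t2 hne ⟨h1, h3⟩ ⟨h2, h4⟩
  set g : Fin n → Fin (2 * n) := fun k => A ((seqX n R hR).take (k.1 + 1)) with hg_def
  set h : Fin n → Fin (2 * n) := fun k => A ((seqX n R hR).take (n + k.1 + 1)) with hh_def
  by_cases hg : Function.Injective g
  · by_cases hh : Function.Injective h
    · by_cases hcom : ∃ m, m ∈ (Finset.univ.image g) ∩ (Finset.univ.image h)
      · -- common middle switch: use Y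
        obtain ⟨m, hm⟩ := hcom
        rw [Finset.mem_inter, Finset.mem_image, Finset.mem_image] at hm
        obtain ⟨⟨a, -, hga⟩, ⟨b, -, hhb⟩⟩ := hm
        set p : Fin (2 * n) → Fin (2 * n) :=
          fun k => A ((seqY n R hR).take (2 * n + k.1 + 1)) with hp_def
        by_cases hp : Function.Injective p
        · have hps : Function.Surjective p := Finite.surjective_of_injective hp
          obtain ⟨k, hk⟩ := hps m
          by_cases hkn : k.1 < n
          · -- I₃→O₁ flow collides with I₁→O₁ flow on O₁
            refine ⟨seqY n R hR, by simp, ⟨0, by omega⟩, m, Or.inr ?_⟩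
            refine keyOut _ _ _ ⟨a.1, by omega⟩ ⟨2 * n + k.1, by omega⟩ ?_ ?_ ?_ ?_ ?_
            · intro hc
              have := congrArg Fin.val hc
              simp at this; omega
            · rw [List.get_eq_getElem]
              exact getY_out0a hR a.1 a.2 _
            · rw [List.get_eq_getElem]
              exact getY_out0c hR (2 * n + k.1) (by omega) (by omega) _
            · show A ((seqY n R hR).take (a.1 + 1)) = m
              rw [← takeXY hR (a.1 + 1) (by omega)]
              exact hga
            · exact hk
          · -- I₃→O₂ flow collides with I₂→O₂ flow on O₂
            refine ⟨seqY n R hR, by simp, ⟨1, by omega⟩, m, Or.inr ?_⟩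
            refine keyOut _ _ _ ⟨n + b.1, by omega⟩ ⟨2 * n + k.1, by omega⟩ ?_ ?_ ?_ ?_ ?_
            · intro hc
              have := congrArg Fin.val hc
              simp at this; omega
            · rw [List.get_eq_getElem]
              exact getY_out1b hR (n + b.1) (by omega) (by have := b.2; omega) _
            · rw [List.get_eq_getElem]
              exact getY_out1d hR (2 * n + k.1) (by omega) (by have := k.2; omega) _
            · show A ((seqY n R hR).take (n + b.1 + 1)) = m
              rw [← takeXY hR (n + b.1 + 1) (by have := b.2; omega)]
              exact hhb
            · exact hk
        · -- two I₃ flows collide on input link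
          rw [Function.not_injective_iff] at hp
          obtain ⟨k, k', hpk, hne⟩ := hp
          refine ⟨seqY n R hR, by simp, ⟨2, by omega⟩, p k, Or.inl ?_⟩
          refine keyIn _ _ _ ⟨2 * n + k.1, by omega⟩ ⟨2 * n + k'.1, by omega⟩ ?_ ?_ ?_ ?_ ?_
          · intro hc
            have := congrArg Fin.val hc
            simp at this
            exact hne (Fin.ext this)
          · rw [List.get_eq_getElem]
            exact getY_inp2 hR (2 * n + k.1) (by omega) (by have := k.2; omega) _
          · rw [List.get_eq_getElem]
            exact getY_inp2 hR (2 * n + k'.1) (by omega) (by have := k'.2; omega) _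
          · rfl
          · exact hpk.symm
      · -- disjoint images: use X
        have hdisj : Disjoint (Finset.univ.image g) (Finset.univ.image h) := by
          rw [Finset.disjoint_left]
          intro x hx hx'
          exact hcom ⟨x, Finset.mem_inter.mpr ⟨hx, hx'⟩⟩
        have hcard : ((Finset.univ.image g) ∪ (Finset.univ.image h)).card = 2 * n := by
          rw [Finset.card_union_of_disjoint hdisj,
            Finset.card_image_of_injective _ hg, Finset.card_image_of_injective _ hh]
          simp; omega
        have huniv : (Finset.univ.image g) ∪ (Finset.univ.image h) = Finset.univ :=
          Finset.eq_univ_of_card _ (by rw [hcard]; simp)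
        set m : Fin (2 * n) := A ((seqX n R hR).take (2 * n + 1)) with hm_def
        have hmem : m ∈ (Finset.univ.image g) ∪ (Finset.univ.image h) := by
          rw [huniv]; exact Finset.mem_univ m
        rcases Finset.mem_union.mp hmem with hmG | hmH
        · obtain ⟨k, -, hgk⟩ := Finset.mem_image.mp hmG
          refine ⟨seqX n R hR, by simp, ⟨0, by omega⟩, m, Or.inl ?_⟩
          refine keyIn _ _ _ ⟨k.1, by have := k.2; omega⟩ ⟨2 * n, by omega⟩ ?_ ?_ ?_ ?_ ?_
          · intro hc
            have := congrArg Fin.val hc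
            simp at this
            have := k.2; omega
          · rw [List.get_eq_getElem]
            exact getX_inp0 hR k.1 k.2 _
          · rw [List.get_eq_getElem]
            exact getX_inp0c hR (2 * n) (by omega) (by omega) _
          · exact hgk
          · rfl
        · obtain ⟨k, -, hhk⟩ := Finset.mem_image.mp hmH
          refine ⟨seqX n R hR, by simp, ⟨1, by omega⟩, m, Or.inr ?_⟩
          refine keyOut _ _ _ ⟨n + k.1, by have := k.2; omega⟩ ⟨2 * n, by omega⟩ ?_ ?_ ?_ ?_ ?_
          · intro hc
            have := congrArg Fin.val hc
            simp at this
            have := k.2; omega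
          · rw [List.get_eq_getElem]
            exact getX_out1b hR (n + k.1) (by omega) (by have := k.2; omega) _
          · rw [List.get_eq_getElem]
            exact getX_out1c hR (2 * n) (by omega) (by omega) _
          · exact hhk
          · rfl
    · -- two I₂ flows collide
      rw [Function.not_injective_iff] at hh
      obtain ⟨k, k', hhk, hne⟩ := hh
      refine ⟨seqX n R hR, by simp, ⟨1, by omega⟩, h k, Or.inl ?_⟩
      refine keyIn _ _ _ ⟨n + k.1, by have := k.2; omega⟩ ⟨n + k'.1, by have := k'.2; omega⟩
        ?_ ?_ ?_ ?_ ?_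
      · intro hc
        have := congrArg Fin.val hc
        simp at this
        exact hne (Fin.ext this)
      · rw [List.get_eq_getElem]
        exact getX_inp1 hR (n + k.1) (by omega) (by have := k.2; omega) _
      · rw [List.get_eq_getElem]
        exact getX_inp1 hR (n + k'.1) (by omega) (by have := k'.2; omega) _
      · rfl
      · exact hhk.symm
  · -- two I₁ flows collide
    rw [Function.not_injective_iff] at hg
    obtain ⟨k, k', hgk, hne⟩ := hg
    refine ⟨seqX n R hR, by simp, ⟨0, by omega⟩, g k, Or.inl ?_⟩
    refine keyIn _ _ _ ⟨k.1, by have := k.2; omega⟩ ⟨k'.1, by have := k'.2; omega⟩ ?_ ?_ ?_ ?_ ?_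
    · intro hc
      have := congrArg Fin.val hc
      simp at this
      exact hne (Fin.ext this)
    · rw [List.get_eq_getElem]
      exact getX_inp0 hR k.1 k.2 _
    · rw [List.get_eq_getElem]
      exact getX_inp0 hR k'.1 k'.2 _
    · rfl
    · exact hgk.symm
end

section
/- Let N = 2n ≥ 2 be even, R ≥ 3, and S = ⌊R/3⌋. For every deterministic online algorithm A on C_{N,R}, there is at most one subset B ⊆ {1,…,S} for which the routing induced by A on the sequence S_B is link-disjoint (has congestion at most 1). In particular, among the 2^S sequences S_B, the algorithm returns a link-disjoint routing for at most one. -/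
open Finset

/-- The induced routing is link-disjoint (equivalently, has congestion at most `1`):
no two flows sharing an input switch or an output switch are assigned the same
middle switch. -/
def LinkDisjoint {N R : ℕ} (A : List (UFlow N R) → Fin N)
    (L : List (UFlow N R)) : Prop :=
  ∀ t t' : Fin L.length, t ≠ t' →
    ((L.get t).inp = (L.get t').inp ∨ (L.get t).out = (L.get t').out) →
    assign A L t ≠ assign A L t'

/-- The translation `X_j` of sequence `X` to the `j`-th block of `C_{2n,R}`
(input switches `3j, 3j+1, 3j+2`, output switches `3j, 3j+1`, 0-based):
`n` flows `I₁ → O₁` and `n` flows `I₂ → O₂` (the prefix), then `n` flows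
`I₁ → O₂`; flows sharing an input (output) switch use pairwise distinct sources
(destinations). -/
def blkX (n R : ℕ) (j : Fin (R / 3)) : List (UFlow (2 * n) R) :=
  ((List.finRange n).map fun k =>
    (⟨⟨3 * j.1, by have := j.2; omega⟩, ⟨k.1, by have := k.2; omega⟩,
      ⟨3 * j.1, by have := j.2; omega⟩, ⟨k.1, by have := k.2; omega⟩⟩ :
      UFlow (2 * n) R)) ++
  ((List.finRange n).map fun k =>
    (⟨⟨3 * j.1 + 1, by have := j.2; omega⟩, ⟨k.1, by have := k.2; omega⟩,
      ⟨3 * j.1 + 1, by have := j.2; omega⟩, ⟨k.1, by have := k.2; omega⟩⟩ :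
      UFlow (2 * n) R)) ++
  ((List.finRange n).map fun k =>
    (⟨⟨3 * j.1, by have := j.2; omega⟩, ⟨n + k.1, by have := k.2; omega⟩,
      ⟨3 * j.1 + 1, by have := j.2; omega⟩, ⟨n + k.1, by have := k.2; omega⟩⟩ :
      UFlow (2 * n) R))

/-- The translation `Y_j` of sequence `Y` to the `j`-th block of `C_{2n,R}`:
the prefix `X1`, then `n` flows `I₃ → O₁` and `n` flows `I₃ → O₂`. -/
def blkY (n R : ℕ) (j : Fin (R / 3)) : List (UFlow (2 * n) R) :=
  ((List.finRange n).map fun k =>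
    (⟨⟨3 * j.1, by have := j.2; omega⟩, ⟨k.1, by have := k.2; omega⟩,
      ⟨3 * j.1, by have := j.2; omega⟩, ⟨k.1, by have := k.2; omega⟩⟩ :
      UFlow (2 * n) R)) ++
  ((List.finRange n).map fun k =>
    (⟨⟨3 * j.1 + 1, by have := j.2; omega⟩, ⟨k.1, by have := k.2; omega⟩,
      ⟨3 * j.1 + 1, by have := j.2; omega⟩, ⟨k.1, by have := k.2; omega⟩⟩ :
      UFlow (2 * n) R)) ++
  ((List.finRange n).map fun k =>
    (⟨⟨3 * j.1 + 2, by have := j.2; omega⟩, ⟨k.1, by have := k.2; omega⟩,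
      ⟨3 * j.1, by have := j.2; omega⟩, ⟨n + k.1, by have := k.2; omega⟩⟩ :
      UFlow (2 * n) R)) ++
  ((List.finRange n).map fun k =>
    (⟨⟨3 * j.1 + 2, by have := j.2; omega⟩, ⟨n + k.1, by have := k.2; omega⟩,
      ⟨3 * j.1 + 1, by have := j.2; omega⟩, ⟨n + k.1, by have := k.2; omega⟩⟩ :
      UFlow (2 * n) R))

/-- The supersequence `S_B` for a subset `B` of the `S = ⌊R/3⌋` blocks: the
concatenation, for `j = 1, …, S` in order, of `Y_j` if `j ∈ B` and of `X_j`
otherwise. -/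
def seqB (n R : ℕ) (B : Finset (Fin (R / 3))) : List (UFlow (2 * n) R) :=
  (List.finRange (R / 3)).flatMap fun j => if j ∈ B then blkY n R j else blkX n R j


section AuxProof

variable {n R : ℕ}

/-- The block used at position `i` of the supersequence. -/
private def gfun (n R : ℕ) (B : Finset (Fin (R / 3))) (i : Fin (R / 3)) :
    List (UFlow (2 * n) R) :=
  if i ∈ B then blkY n R i else blkX n R i

private lemma seqB_eq_flatMap (B : Finset (Fin (R / 3))) :
    seqB n R B = (List.finRange (R / 3)).flatMap (gfun n R B) := rfl

private lemma blkX_length (j : Fin (R / 3)) : (blkX n R j).length = 3 * n := by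
  simp only [blkX, List.length_append, List.length_map, List.length_finRange]; omega

private lemma blkY_length (j : Fin (R / 3)) : (blkY n R j).length = 4 * n := by
  simp only [blkY, List.length_append, List.length_map, List.length_finRange]; omega

private lemma flatMap_congr' {α β : Type*} {l : List α} {f g : α → List β}
    (h : ∀ x ∈ l, f x = g x) : l.flatMap f = l.flatMap g := by
  induction l with
  | nil => rfl
  | cons a l ih =>
    rw [List.flatMap_cons, List.flatMap_cons, h a (by simp),
      ih fun x hx => h x (List.mem_cons_of_mem _ hx)]

private lemma lt_of_mem_take {m k : ℕ} {x : Fin m} (hx : x ∈ (List.finRange m).take k) :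
    x.1 < k := by
  rw [List.mem_iff_getElem] at hx
  obtain ⟨i, hi, hxe⟩ := hx
  have hik : i < k := lt_of_lt_of_le hi (by simp [List.length_take])
  have hxi : x.1 = i := by
    rw [← hxe, List.getElem_take, List.getElem_finRange]
    simp
  omega

private lemma getElem_mid {α : Type*} (l₁ l₂ l₃ : List α) (i : ℕ) (h : i < l₂.length) :
    (l₁ ++ (l₂ ++ l₃))[l₁.length + i]'(by simp; omega) = l₂[i] := by
  rw [List.getElem_append_right (by omega)]
  simp only [Nat.add_sub_cancel_left]
  exact List.getElem_append_left h

private lemma take_append_len {α : Type*} (l₁ l₂ : List α) (m : ℕ) :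
    (l₁ ++ l₂).take (l₁.length + m) = l₁ ++ l₂.take m := by
  rw [List.take_append, List.take_of_length_le (by omega),
    Nat.add_sub_cancel_left]

private lemma blk_take_eq (j : Fin (R / 3)) {m : ℕ} (hm : m ≤ 2 * n) :
    (blkX n R j).take m = (blkY n R j).take m := by
  unfold blkX blkY
  simp only [List.take_append, List.length_append, List.length_map,
    List.length_finRange]
  rw [show m - (n + n) = 0 by omega, show m - (n + n + n) = 0 by omega]
  simp

private lemma seqB_decomp (B : Finset (Fin (R / 3))) (j : Fin (R / 3)) :
    seqB n R B = ((List.finRange (R / 3)).take j.1).flatMap (gfun n R B) ++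
      (gfun n R B j ++ ((List.finRange (R / 3)).drop (j.1 + 1)).flatMap (gfun n R B)) := by
  have hj : j.1 < (List.finRange (R / 3)).length := by simp [j.2]
  conv_lhs => rw [seqB_eq_flatMap, ← List.take_append_drop j.1 (List.finRange (R / 3))]
  rw [List.flatMap_append, List.drop_eq_getElem_cons hj, List.flatMap_cons,
    show (List.finRange (R / 3))[j.1]'hj = j from by
      apply Fin.ext; simp [List.getElem_finRange]]

private lemma blkX_inp (j : Fin (R / 3)) (i : ℕ) (h : i < (blkX n R j).length) :
    ((blkX n R j)[i]).inp.1 = if n ≤ i ∧ i < 2 * n then 3 * j.1 + 1 else 3 * j.1 := by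
  have h' : i < 3 * n := by rwa [blkX_length] at h
  simp only [blkX, List.getElem_append, List.length_append, List.length_map, List.length_finRange,
    List.getElem_map, List.getElem_finRange]
  split_ifs <;> simp <;> omega

private lemma blkX_out (j : Fin (R / 3)) (i : ℕ) (h : i < (blkX n R j).length) :
    ((blkX n R j)[i]).out.1 = if i < n then 3 * j.1 else 3 * j.1 + 1 := by
  have h' : i < 3 * n := by rwa [blkX_length] at h
  simp only [blkX, List.getElem_append, List.length_append, List.length_map, List.length_finRange,
    List.getElem_map, List.getElem_finRange]
  split_ifs <;> simp <;> omega

private lemma blkY_inp (j : Fin (R / 3)) (i : ℕ) (h : i < (blkY n R j).length) :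
    ((blkY n R j)[i]).inp.1 =
      if i < n then 3 * j.1 else if i < 2 * n then 3 * j.1 + 1 else 3 * j.1 + 2 := by
  have h' : i < 4 * n := by rwa [blkY_length] at h
  simp only [blkY, List.getElem_append, List.length_append, List.length_map, List.length_finRange,
    List.getElem_map, List.getElem_finRange]
  split_ifs <;> simp <;> omega

private lemma blkY_out (j : Fin (R / 3)) (i : ℕ) (h : i < (blkY n R j).length) :
    ((blkY n R j)[i]).out.1 =
      if i < n ∨ (2 * n ≤ i ∧ i < 3 * n) then 3 * j.1 else 3 * j.1 + 1 := by
  have h' : i < 4 * n := by rwa [blkY_length] at h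
  simp only [blkY, List.getElem_append, List.length_append, List.length_map, List.length_finRange,
    List.getElem_map, List.getElem_finRange]
  split_ifs <;> simp <;> omega

private lemma core (hn : 1 ≤ n)
    (A : List (UFlow (2 * n) R) → Fin (2 * n))
    (B B' : Finset (Fin (R / 3))) (j : Fin (R / 3))
    (hjB : j ∉ B) (hjB' : j ∈ B')
    (hag : ∀ i : Fin (R / 3), i.1 < j.1 → (i ∈ B ↔ i ∈ B'))
    (hB : LinkDisjoint A (seqB n R B)) (hB' : LinkDisjoint A (seqB n R B')) :
    False := by
  classical
  set pre := ((List.finRange (R / 3)).take j.1).flatMap (gfun n R B) with hpre_def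
  set suf := ((List.finRange (R / 3)).drop (j.1 + 1)).flatMap (gfun n R B) with hsuf_def
  set suf' := ((List.finRange (R / 3)).drop (j.1 + 1)).flatMap (gfun n R B') with hsuf'_def
  have hlenX := blkX_length (n := n) (R := R) j
  have hlenY := blkY_length (n := n) (R := R) j
  have hpre' : ((List.finRange (R / 3)).take j.1).flatMap (gfun n R B') = pre := by
    rw [hpre_def]
    exact flatMap_congr' fun x hx => by
      have hxj := lt_of_mem_take hx
      simp only [gfun, hag x hxj]
  have hdec : seqB n R B = pre ++ (blkX n R j ++ suf) := by
    rw [seqB_decomp B j, show gfun n R B j = blkX n R j from if_neg hjB]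
  have hdec' : seqB n R B' = pre ++ (blkY n R j ++ suf') := by
    rw [seqB_decomp B' j, show gfun n R B' j = blkY n R j from if_pos hjB', hpre']
  set p := pre.length with hp_def
  have hLlen : (seqB n R B).length = p + (3 * n + suf.length) := by
    rw [hdec]; simp only [List.length_append, hlenX]; rfl
  have hL'len : (seqB n R B').length = p + (4 * n + suf'.length) := by
    rw [hdec']; simp only [List.length_append, hlenY]; rfl
  have hget : ∀ (i : ℕ) (hi : i < 3 * n) (hp : p + i < (seqB n R B).length),
      (seqB n R B)[p + i] = (blkX n R j)[i]'(by omega) := by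
    intro i hi hp
    simp only [hdec, hp_def]
    exact getElem_mid pre (blkX n R j) suf i (by omega)
  have hget' : ∀ (i : ℕ) (hi : i < 4 * n) (hp : p + i < (seqB n R B').length),
      (seqB n R B')[p + i] = (blkY n R j)[i]'(by omega) := by
    intro i hi hp
    simp only [hdec', hp_def]
    exact getElem_mid pre (blkY n R j) suf' i (by omega)
  have htake : ∀ i : ℕ, i < 2 * n →
      (seqB n R B').take (p + i + 1) = (seqB n R B).take (p + i + 1) := by
    intro i hi
    rw [hdec, hdec', hp_def, show pre.length + i + 1 = pre.length + (i + 1) from by omega,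
      take_append_len, take_append_len,
      List.take_append_of_le_length (l₁ := blkX n R j) (by omega),
      List.take_append_of_le_length (l₁ := blkY n R j) (by omega),
      blk_take_eq j (show i + 1 ≤ 2 * n by omega)]
  -- key consequences of link-disjointness within block j
  have keyX : ∀ (i i' : ℕ) (hi : i < 3 * n) (hi' : i' < 3 * n), i ≠ i' →
      (((blkX n R j)[i]'(by omega)).inp = ((blkX n R j)[i']'(by omega)).inp ∨
       ((blkX n R j)[i]'(by omega)).out = ((blkX n R j)[i']'(by omega)).out) →
      A ((seqB n R B).take (p + i + 1)) ≠ A ((seqB n R B).take (p + i' + 1)) := by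
    intro i i' hi hi' hne hsh
    have h1 : p + i < (seqB n R B).length := by omega
    have h2 : p + i' < (seqB n R B).length := by omega
    exact hB ⟨p + i, h1⟩ ⟨p + i', h2⟩
      (by simp only [ne_eq, Fin.mk.injEq]; omega)
      (by
        rw [List.get_eq_getElem, List.get_eq_getElem]
        simp only []
        rw [hget i hi h1, hget i' hi' h2]
        exact hsh)
  have keyY : ∀ (i i' : ℕ) (hi : i < 4 * n) (hi' : i' < 4 * n), i ≠ i' →
      (((blkY n R j)[i]'(by omega)).inp = ((blkY n R j)[i']'(by omega)).inp ∨
       ((blkY n R j)[i]'(by omega)).out = ((blkY n R j)[i']'(by omega)).out) →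
      A ((seqB n R B').take (p + i + 1)) ≠ A ((seqB n R B').take (p + i' + 1)) := by
    intro i i' hi hi' hne hsh
    have h1 : p + i < (seqB n R B').length := by omega
    have h2 : p + i' < (seqB n R B').length := by omega
    exact hB' ⟨p + i, h1⟩ ⟨p + i', h2⟩
      (by simp only [ne_eq, Fin.mk.injEq]; omega)
      (by
        rw [List.get_eq_getElem, List.get_eq_getElem]
        simp only []
        rw [hget' i hi h1, hget' i' hi' h2]
        exact hsh)
  -- the middle switches
  set a1 : Fin n → Fin (2 * n) := fun k => A ((seqB n R B).take (p + k.1 + 1)) with ha1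
  set a2 : Fin n → Fin (2 * n) := fun k => A ((seqB n R B).take (p + (n + k.1) + 1)) with ha2
  set a3 : Fin n → Fin (2 * n) := fun k => A ((seqB n R B).take (p + (2 * n + k.1) + 1)) with ha3
  set b3 : Fin n → Fin (2 * n) := fun k => A ((seqB n R B').take (p + (2 * n + k.1) + 1)) with hb3
  set b4 : Fin n → Fin (2 * n) := fun k => A ((seqB n R B').take (p + (3 * n + k.1) + 1)) with hb4
  -- constraints from L = seqB B
  have h1inj : Function.Injective a1 := by
    intro k k' hkk
    by_contra hne
    refine keyX k.1 k'.1 (by have := k.2; omega) (by have := k'.2; omega)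
      (fun h => hne (Fin.ext h)) ?_ hkk
    refine Or.inl (Fin.ext ?_)
    rw [blkX_inp j k.1 (by have := k.2; omega), blkX_inp j k'.1 (by have := k'.2; omega)]
    have := k.2; have := k'.2
    split_ifs <;> omega
  have h2inj : Function.Injective a2 := by
    intro k k' hkk
    by_contra hne
    refine keyX (n + k.1) (n + k'.1) (by have := k.2; omega) (by have := k'.2; omega)
      (fun h => hne (Fin.ext (by omega))) ?_ hkk
    refine Or.inl (Fin.ext ?_)
    rw [blkX_inp j _ (by have := k.2; omega), blkX_inp j _ (by have := k'.2; omega)]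
    have := k.2; have := k'.2
    split_ifs <;> omega
  have h3inj : Function.Injective a3 := by
    intro k k' hkk
    by_contra hne
    refine keyX (2 * n + k.1) (2 * n + k'.1) (by have := k.2; omega) (by have := k'.2; omega)
      (fun h => hne (Fin.ext (by omega))) ?_ hkk
    refine Or.inl (Fin.ext ?_)
    rw [blkX_inp j _ (by have := k.2; omega), blkX_inp j _ (by have := k'.2; omega)]
    have := k.2; have := k'.2
    split_ifs <;> omega
  have h31 : ∀ k k' : Fin n, a3 k ≠ a1 k' := by
    intro k k'
    refine keyX (2 * n + k.1) k'.1 (by have := k.2; omega) (by have := k'.2; omega)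
      (by have := k.2; have := k'.2; omega) ?_
    refine Or.inl (Fin.ext ?_)
    rw [blkX_inp j _ (by have := k.2; omega), blkX_inp j _ (by have := k'.2; omega)]
    have := k.2; have := k'.2
    split_ifs <;> omega
  have h32 : ∀ k k' : Fin n, a3 k ≠ a2 k' := by
    intro k k'
    refine keyX (2 * n + k.1) (n + k'.1) (by have := k.2; omega) (by have := k'.2; omega)
      (by have := k.2; have := k'.2; omega) ?_
    refine Or.inr (Fin.ext ?_)
    rw [blkX_out j _ (by have := k.2; omega), blkX_out j _ (by have := k'.2; omega)]
    have := k.2; have := k'.2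
    split_ifs <;> omega
  -- constraints from L' = seqB B'
  have hb3a1 : ∀ k k' : Fin n, b3 k ≠ a1 k' := by
    intro k k'
    have := keyY (2 * n + k.1) k'.1 (by have := k.2; omega) (by have := k'.2; omega)
      (by have := k.2; have := k'.2; omega)
      (by
        refine Or.inr (Fin.ext ?_)
        rw [blkY_out j _ (by have := k.2; omega), blkY_out j _ (by have := k'.2; omega)]
        have := k.2; have := k'.2
        split_ifs <;> omega)
    rwa [htake k'.1 (by have := k'.2; omega)] at this
  have hb4a2 : ∀ k k' : Fin n, b4 k ≠ a2 k' := by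
    intro k k'
    have := keyY (3 * n + k.1) (n + k'.1) (by have := k.2; omega) (by have := k'.2; omega)
      (by have := k.2; have := k'.2; omega)
      (by
        refine Or.inr (Fin.ext ?_)
        rw [blkY_out j _ (by have := k.2; omega), blkY_out j _ (by have := k'.2; omega)]
        have := k.2; have := k'.2
        split_ifs <;> omega)
    rwa [htake (n + k'.1) (by have := k'.2; omega)] at this
  have hb3inj : Function.Injective b3 := by
    intro k k' hkk
    by_contra hne
    refine keyY (2 * n + k.1) (2 * n + k'.1) (by have := k.2; omega) (by have := k'.2; omega)
      (fun h => hne (Fin.ext (by omega))) ?_ hkk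
    refine Or.inl (Fin.ext ?_)
    rw [blkY_inp j _ (by have := k.2; omega), blkY_inp j _ (by have := k'.2; omega)]
    have := k.2; have := k'.2
    split_ifs <;> omega
  have hb4inj : Function.Injective b4 := by
    intro k k' hkk
    by_contra hne
    refine keyY (3 * n + k.1) (3 * n + k'.1) (by have := k.2; omega) (by have := k'.2; omega)
      (fun h => hne (Fin.ext (by omega))) ?_ hkk
    refine Or.inl (Fin.ext ?_)
    rw [blkY_inp j _ (by have := k.2; omega), blkY_inp j _ (by have := k'.2; omega)]
    have := k.2; have := k'.2
    split_ifs <;> omega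
  have hb34 : ∀ k k' : Fin n, b3 k ≠ b4 k' := by
    intro k k'
    refine keyY (2 * n + k.1) (3 * n + k'.1) (by have := k.2; omega) (by have := k'.2; omega)
      (by have := k.2; have := k'.2; omega) ?_
    refine Or.inl (Fin.ext ?_)
    rw [blkY_inp j _ (by have := k.2; omega), blkY_inp j _ (by have := k'.2; omega)]
    have := k.2; have := k'.2
    split_ifs <;> omega
  -- finishing counting argument
  set M1 := Finset.image a1 Finset.univ with hM1
  set M2 := Finset.image a2 Finset.univ with hM2
  set M3 := Finset.image a3 Finset.univ with hM3
  set N3 := Finset.image b3 Finset.univ with hN3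
  set N4 := Finset.image b4 Finset.univ with hN4
  have cM1 : M1.card = n := by
    rw [hM1, Finset.card_image_of_injective _ h1inj, Finset.card_univ, Fintype.card_fin]
  have cM2 : M2.card = n := by
    rw [hM2, Finset.card_image_of_injective _ h2inj, Finset.card_univ, Fintype.card_fin]
  have cM3 : M3.card = n := by
    rw [hM3, Finset.card_image_of_injective _ h3inj, Finset.card_univ, Fintype.card_fin]
  have cN3 : N3.card = n := by
    rw [hN3, Finset.card_image_of_injective _ hb3inj, Finset.card_univ, Fintype.card_fin]
  have cN4 : N4.card = n := by
    rw [hN4, Finset.card_image_of_injective _ hb4inj, Finset.card_univ, Fintype.card_fin]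
  have dis31 : Disjoint M3 M1 := by
    rw [Finset.disjoint_left]
    rintro x hx hx'
    rw [hM3, Finset.mem_image] at hx
    rw [hM1, Finset.mem_image] at hx'
    obtain ⟨k, -, rfl⟩ := hx
    obtain ⟨k', -, hk'⟩ := hx'
    exact h31 k k' hk'.symm
  have dis32 : Disjoint M3 M2 := by
    rw [Finset.disjoint_left]
    rintro x hx hx'
    rw [hM3, Finset.mem_image] at hx
    rw [hM2, Finset.mem_image] at hx'
    obtain ⟨k, -, rfl⟩ := hx
    obtain ⟨k', -, hk'⟩ := hx'
    exact h32 k k' hk'.symm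
  have e1 : M1 = M3ᶜ := by
    apply Finset.eq_of_subset_of_card_le
    · intro x hx
      rw [Finset.mem_compl]
      exact fun hx3 => Finset.disjoint_left.mp dis31 hx3 hx
    · rw [Finset.card_compl, cM1, cM3, Fintype.card_fin]; omega
  have e2 : M2 = M3ᶜ := by
    apply Finset.eq_of_subset_of_card_le
    · intro x hx
      rw [Finset.mem_compl]
      exact fun hx3 => Finset.disjoint_left.mp dis32 hx3 hx
    · rw [Finset.card_compl, cM2, cM3, Fintype.card_fin]; omega
  have hM12 : M1 = M2 := by rw [e1, e2]
  have dis34 : Disjoint N3 N4 := by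
    rw [Finset.disjoint_left]
    rintro x hx hx'
    rw [hN3, Finset.mem_image] at hx
    rw [hN4, Finset.mem_image] at hx'
    obtain ⟨k, -, rfl⟩ := hx
    obtain ⟨k', -, hk'⟩ := hx'
    exact hb34 k k' hk'.symm
  have hsub : N3 ∪ N4 ⊆ M1ᶜ := by
    apply Finset.union_subset
    · intro x hx
      rw [hN3, Finset.mem_image] at hx
      obtain ⟨k, -, rfl⟩ := hx
      rw [Finset.mem_compl, hM1, Finset.mem_image]
      rintro ⟨k', -, hk'⟩
      exact hb3a1 k k' hk'.symm
    · intro x hx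
      rw [hN4, Finset.mem_image] at hx
      obtain ⟨k, -, rfl⟩ := hx
      rw [Finset.mem_compl, hM12, hM2, Finset.mem_image]
      rintro ⟨k', -, hk'⟩
      exact hb4a2 k k' hk'.symm
  have hle := Finset.card_le_card hsub
  rw [Finset.card_union_of_disjoint dis34, cN3, cN4, Finset.card_compl, cM1,
    Fintype.card_fin] at hle
  omega

end AuxProof

/-- For every deterministic online algorithm, the induced routing is link-disjoint
for at most one of the `2^S` supersequences `S_B`. -/
theorem online_linkDisjoint_at_most_one {n R : ℕ} (hn : 1 ≤ n) (hR : 3 ≤ R)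
    (A : List (UFlow (2 * n) R) → Fin (2 * n))
    (B B' : Finset (Fin (R / 3)))
    (hB : LinkDisjoint A (seqB n R B)) (hB' : LinkDisjoint A (seqB n R B')) :
    B = B' := by
  classical
  by_contra hBB
  set D := Finset.filter (fun i : Fin (R / 3) => ¬(i ∈ B ↔ i ∈ B')) Finset.univ with hDdef
  have hD : D.Nonempty := by
    by_contra hD
    rw [Finset.not_nonempty_iff_eq_empty, Finset.filter_eq_empty_iff] at hD
    apply hBB
    ext i
    have := hD (Finset.mem_univ i)
    tauto
  set j := D.min' hD with hjdef
  have hjD : j ∈ D := D.min'_mem hD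
  have hj : ¬(j ∈ B ↔ j ∈ B') := by
    rw [hDdef] at hjD
    simpa using hjD
  have hag : ∀ i : Fin (R / 3), i.1 < j.1 → (i ∈ B ↔ i ∈ B') := by
    intro i hi
    by_contra hiff
    have hmem : i ∈ D := by rw [hDdef]; simp [hiff]
    have := Fin.le_def.mp (D.min'_le i hmem)
    omega
  by_cases hjB : j ∈ B
  · have hjB' : j ∉ B' := fun h => hj ⟨fun _ => h, fun _ => hjB⟩
    exact core hn A B' B j hjB' hjB (fun i hi => (hag i hi).symm) hB' hB
  · have hjB' : j ∈ B' := by tauto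
    exact core hn A B B' j hjB hjB' hag hB hB'
end
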